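/- Let α > 0, x ∈ ℝ^d, and let C = {y ∈ ℝ^d \ {x} : ⟨v, y−x⟩/‖y−x‖ ≥ cos(π/24)} for some unit vector v (a cone of angle π/12 with apex x). Set R₁ = α/64, R₂ = (1 + 31·cos(π/6))·α/(64·cos(π/12)), R₃ = 30α/64. Then for any p, y, z ∈ C with 0 < ‖y−x‖ < R₁, R₂ ≤ ‖p−x‖ < R₃, and ‖x−z‖ ≥ α/2, one has ‖z−p‖ < ‖z−y‖. -/

import Mathlib

open Real

set_option maxHeartbeats 1000000 in
lemma cone_inner_bound {E : Type*} [NormedAddCommGroup E] [InnerProductSpace ℝ E]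
    (v a c : E) (hv : ‖v‖ = 1)
    (ha : 0 < ‖a‖) (hc : 0 < ‖c‖)
    (h1 : Real.cos (π / 24) ≤ (inner ℝ v a : ℝ) / ‖a‖)
    (h2 : Real.cos (π / 24) ≤ (inner ℝ v c : ℝ) / ‖c‖) :
    ‖a‖ * ‖c‖ * Real.cos (π / 12) ≤ (inner ℝ a c : ℝ) := by
  have hcospos : 0 < Real.cos (π / 24) := by
    apply Real.cos_pos_of_mem_Ioo
    constructor <;> nlinarith [Real.pi_pos]
  have hsinpos : 0 ≤ Real.sin (π / 24) := by
    apply Real.sin_nonneg_of_nonneg_of_le_pi <;> nlinarith [Real.pi_pos]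
  set s : ℝ := inner ℝ v a with hs
  set t : ℝ := inner ℝ v c with ht
  have hsa : ‖a‖ * Real.cos (π / 24) ≤ s := by
    have h1' : 0 ≤ s / ‖a‖ - Real.cos (π / 24) := by linarith
    have := mul_nonneg (le_of_lt ha) h1'
    rw [mul_sub, mul_div_cancel₀ _ (ne_of_gt ha)] at this
    linarith
  have htc : ‖c‖ * Real.cos (π / 24) ≤ t := by
    have h2' : 0 ≤ t / ‖c‖ - Real.cos (π / 24) := by linarith
    have := mul_nonneg (le_of_lt hc) h2'
    rw [mul_sub, mul_div_cancel₀ _ (ne_of_gt hc)] at this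
    linarith
  have hspos : 0 < s := lt_of_lt_of_le (by positivity) hsa
  have htpos : 0 < t := lt_of_lt_of_le (by positivity) htc
  set a' : E := a - s • v with ha'
  set c' : E := c - t • v with hc'
  have hvv : (inner ℝ v v : ℝ) = 1 := by
    rw [real_inner_self_eq_norm_sq, hv]; norm_num
  have hva' : (inner ℝ v a' : ℝ) = 0 := by
    rw [ha', inner_sub_right, real_inner_smul_right, hvv]; ring
  have hvc' : (inner ℝ v c' : ℝ) = 0 := by
    rw [hc', inner_sub_right, real_inner_smul_right, hvv]; ring
  have hexpand : (inner ℝ a c : ℝ) = s * t + (inner ℝ a' c' : ℝ) := by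
    have e1 : a = a' + s • v := by rw [ha']; abel
    have e2 : c = c' + t • v := by rw [hc']; abel
    conv_lhs => rw [e1, e2]
    rw [inner_add_left, inner_add_right, inner_add_right, real_inner_smul_right,
      real_inner_smul_left, real_inner_smul_left, real_inner_smul_right,
      show (inner ℝ a' v : ℝ) = 0 from by rw [real_inner_comm]; exact hva', hvc', hvv]
    ring
  have hna' : ‖a'‖ ^ 2 = ‖a‖ ^ 2 - s ^ 2 := by
    rw [ha', norm_sub_sq_real, real_inner_smul_right, real_inner_comm, ← hs, norm_smul, hv]
    simp [abs_of_pos hspos]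
    ring
  have hnc' : ‖c'‖ ^ 2 = ‖c‖ ^ 2 - t ^ 2 := by
    rw [hc', norm_sub_sq_real, real_inner_smul_right, real_inner_comm, ← ht, norm_smul, hv]
    simp [abs_of_pos htpos]
    ring
  have hsc : Real.sin (π / 24) ^ 2 + Real.cos (π / 24) ^ 2 = 1 := Real.sin_sq_add_cos_sq _
  have hba' : ‖a'‖ ≤ ‖a‖ * Real.sin (π / 24) := by
    have hsq : ‖a'‖ ^ 2 ≤ (‖a‖ * Real.sin (π / 24)) ^ 2 := by
      rw [hna']
      nlinarith [mul_le_mul_of_nonneg_left hsa (mul_nonneg ha.le hcospos.le)]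
    exact (pow_le_pow_iff_left₀ (norm_nonneg _) (by positivity) (by norm_num)).mp hsq
  have hbc' : ‖c'‖ ≤ ‖c‖ * Real.sin (π / 24) := by
    have hsq : ‖c'‖ ^ 2 ≤ (‖c‖ * Real.sin (π / 24)) ^ 2 := by
      rw [hnc']
      nlinarith [mul_le_mul_of_nonneg_left htc (mul_nonneg hc.le hcospos.le)]
    exact (pow_le_pow_iff_left₀ (norm_nonneg _) (by positivity) (by norm_num)).mp hsq
  have hinner' : -(‖a'‖ * ‖c'‖) ≤ (inner ℝ a' c' : ℝ) := by
    have := abs_real_inner_le_norm a' c'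
    rw [abs_le] at this
    exact this.1
  have hcos12 : Real.cos (π / 12) = Real.cos (π / 24) ^ 2 - Real.sin (π / 24) ^ 2 := by
    have h : (π / 12 : ℝ) = 2 * (π / 24) := by ring
    rw [h, Real.cos_two_mul]
    linarith
  have hprod : ‖a'‖ * ‖c'‖ ≤ (‖a‖ * Real.sin (π / 24)) * (‖c‖ * Real.sin (π / 24)) :=
    mul_le_mul hba' hbc' (norm_nonneg c') (by positivity)
  have hst : (‖a‖ * Real.cos (π / 24)) * (‖c‖ * Real.cos (π / 24)) ≤ s * t :=
    mul_le_mul hsa htc (by positivity) (le_of_lt hspos)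
  rw [hexpand, hcos12]
  nlinarith

lemma cone_arith (α A B Cn k c6 ica icb : ℝ) (hα : 0 < α)
    (hAn : 0 < A) (hA4 : A < 30 * α / 64)
    (hB2 : B < α / 64)
    (hCn : α / 2 ≤ Cn)
    (hk1 : k ≤ 1) (hk0 : 0.96 < k) (hc6 : 0.866 < c6)
    (hR2A : (1 + 31 * c6) * α ≤ A * (64 * k))
    (hca : Cn * A * k ≤ ica) (hcb : icb ≤ Cn * B) :
    Cn ^ 2 - 2 * ica + A ^ 2 < Cn ^ 2 - 2 * icb + B ^ 2 := by
  have hAkB : B < A * k := by nlinarith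
  have hAk2 : 0.41 * α ≤ A * k := by nlinarith
  have hA2 : A ^ 2 < (30 * α / 64) ^ 2 := by nlinarith
  nlinarith [mul_le_mul_of_nonneg_right (show α ≤ 2 * Cn by linarith)
      (le_of_lt (sub_pos.mpr hAkB)),
    mul_le_mul_of_nonneg_left hAk2 hα.le,
    mul_lt_mul_of_pos_left hB2 hα, sq_nonneg B]

set_option maxHeartbeats 1000000 in
/-- the cone lemma (Lemma 5.3 in the paper). -/
theorem cone_lemma {d : ℕ} (α : ℝ) (hα : 0 < α)
    (x v : EuclideanSpace ℝ (Fin d)) (hv : ‖v‖ = 1)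
    (C : Set (EuclideanSpace ℝ (Fin d)))
    (hC : C = {y | y ≠ x ∧ Real.cos (π / 24) ≤ (inner ℝ v (y - x) : ℝ) / ‖y - x‖})
    (R₁ R₂ R₃ : ℝ) (hR1 : R₁ = α / 64)
    (hR2 : R₂ = (1 + 31 * Real.cos (π / 6)) * α / (64 * Real.cos (π / 12)))
    (hR3 : R₃ = 30 * α / 64)
    (p y z : EuclideanSpace ℝ (Fin d)) (hp : p ∈ C) (hy : y ∈ C) (hz : z ∈ C)
    (h1 : 0 < ‖y - x‖) (h2 : ‖y - x‖ < R₁)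
    (h3 : R₂ ≤ ‖p - x‖) (h4 : ‖p - x‖ < R₃)
    (h5 : α / 2 ≤ ‖x - z‖) :
    ‖z - p‖ < ‖z - y‖ := by
  subst hC hR1 hR2 hR3
  obtain ⟨hpne, hpc⟩ := hp
  obtain ⟨hyne, hyc⟩ := hy
  obtain ⟨hzne, hzc⟩ := hz
  set a : EuclideanSpace ℝ (Fin d) := p - x with hadef
  set b : EuclideanSpace ℝ (Fin d) := y - x with hbdef
  set c : EuclideanSpace ℝ (Fin d) := z - x with hcdef
  have hxz : ‖x - z‖ = ‖c‖ := by rw [hcdef, norm_sub_rev]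
  rw [hxz] at h5
  have hcn : 0 < ‖c‖ := by linarith
  have han : 0 < ‖a‖ := by
    rw [hadef, norm_pos_iff, sub_ne_zero]; exact hpne
  -- numeric bounds on the cosines
  have hc6 : Real.cos (π / 6) = Real.sqrt 3 / 2 := Real.cos_pi_div_six
  have hs3 : (1.732 : ℝ) < Real.sqrt 3 := by
    have h : (1.732 : ℝ) = Real.sqrt (1.732 ^ 2) := by
      rw [Real.sqrt_sq]; norm_num
    rw [h]
    apply Real.sqrt_lt_sqrt <;> norm_num
  have hc6lb : (0.866 : ℝ) < Real.cos (π / 6) := by rw [hc6]; linarith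
  have hk1 : Real.cos (π / 12) ≤ 1 := Real.cos_le_one _
  have hkpos : 0 < Real.cos (π / 12) := by
    apply Real.cos_pos_of_mem_Ioo
    constructor <;> nlinarith [Real.pi_pos]
  have hksq : Real.cos (π / 12) ^ 2 = 1 / 2 + Real.cos (π / 6) / 2 := by
    have h : (π / 6 : ℝ) = 2 * (π / 12) := by ring
    rw [h, Real.cos_two_mul]; ring
  have hk0 : (0.96 : ℝ) < Real.cos (π / 12) := by nlinarith
  -- inner ℝ product bounds
  have hca : ‖c‖ * ‖a‖ * Real.cos (π / 12) ≤ (inner ℝ c a : ℝ) :=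
    cone_inner_bound v c a hv hcn han hzc hpc
  have hcb : (inner ℝ c b : ℝ) ≤ ‖c‖ * ‖b‖ := real_inner_le_norm c b
  -- expand squared norms
  have hzp : z - p = c - a := by rw [hadef, hcdef]; abel
  have hzy : z - y = c - b := by rw [hbdef, hcdef]; abel
  have e1 : ‖c - a‖ ^ 2 = ‖c‖ ^ 2 - 2 * (inner ℝ c a : ℝ) + ‖a‖ ^ 2 := norm_sub_sq_real c a
  have e2 : ‖c - b‖ ^ 2 = ‖c‖ ^ 2 - 2 * (inner ℝ c b : ℝ) + ‖b‖ ^ 2 := norm_sub_sq_real c b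
  -- numeric work
  set A := ‖a‖
  set B := ‖b‖
  set Cn := ‖c‖
  set k := Real.cos (π / 12) with hkdef
  have hR2A : (1 + 31 * Real.cos (π / 6)) * α ≤ A * (64 * k) := by
    rw [← div_le_iff₀ (by positivity)]; exact h3
  have key : ‖c - a‖ ^ 2 < ‖c - b‖ ^ 2 := by
    rw [e1, e2]
    exact cone_arith α A B Cn k (Real.cos (π / 6)) (inner ℝ c a) (inner ℝ c b) hα han h4 h2 h5
      hk1 hk0 hc6lb hR2A hca hcb
  rw [hzp, hzy]
  have hn1 : 0 ≤ ‖c - a‖ := norm_nonneg _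
  have hn2 : 0 ≤ ‖c - b‖ := norm_nonneg _
  nlinarith [key, hn1, hn2]
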